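/- Let k > 2 and let M : Fin k → Fin k → ℝ be a row-stochastic matrix (M i j ≥ 0 and ∑_j M i j = 1 for all i) such that M j j = 1/2 for all j and M j 0 = 1/2 for all j (all misclassified mass goes to class 0). Assume the true class distribution is uniform, P(x ∈ C_i) = 1/k for all i, and define the marginal μ_j := ∑_{i} (1/k) · M i j. Then: (i) the diagonal entries M j j are equal for all j, so RDP is satisfied; and (ii) μ_0 = 1/2 ≠ 1/k, so PR is violated. -/
import Mathlib


/-- If a row-stochastic transition matrix `M` on `k > 2` classes
has `M j j = 1/2` for all `j` and sends all misclassified mass to class `0`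
(`M j 0 = 1/2`), then RDP is satisfied (equal diagonal entries), but the
marginal under a uniform true class distribution puts mass `1/2 ≠ 1/k` on
class `0`, so PR is violated. -/
theorem rdp_not_implies_pr (k : ℕ) (hk : 2 < k) (M : Fin k → Fin k → ℝ)
    (hM0 : ∀ i j, 0 ≤ M i j) (hMrow : ∀ i, ∑ j, M i j = 1)
    (hdiag : ∀ j, M j j = 1 / 2)
    (hcol0 : ∀ j, M j ⟨0, by omega⟩ = 1 / 2) :
    (∀ i j : Fin k, M i i = M j j) ∧
    (∑ i, (1 / (k : ℝ)) * M i ⟨0, by omega⟩ = 1 / 2) ∧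
    (1 / 2 : ℝ) ≠ 1 / (k : ℝ) := by
  have hk0 : (k : ℝ) ≠ 0 := by positivity
  refine ⟨fun i j => by rw [hdiag, hdiag], ?_, ?_⟩
  · simp only [hcol0, Finset.sum_const, Finset.card_univ, Fintype.card_fin, nsmul_eq_mul]
    field_simp
  · intro h
    have : (k : ℝ) = 2 := by field_simp at h; linarith
    have : k = 2 := by exact_mod_cast this
    omega
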